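/- Let a, b, c be real numbers with c ≠ 0. For every twice continuously differentiable function f : ℝ → Mat₃(ℝ) and every x ∈ ℝ, setting g(y) = f(y)·T(y) with T(y) = [[1, ay, 0],[0,1,0],[0, cy, 1]] and writing g₁, g₂, g₃ for the columns of g, one has f''(x)·G₂(x) + f'(x)·G₁(x) + f(x)·G₀ = R(x)·T(x)⁻¹, where T(x)⁻¹ = [[1, -ax, 0],[0,1,0],[0, -cx, 1]] and R(x) is the 3×3 matrix whose first column is (2(c²+2)/c²)·g₁(x), whose second column is g₂''(x) - 2x·g₂'(x) + (2(c²+2)/c²)·g₂(x) + (2/c)·(g₃'(x) - 2x·g₃(x)), and whose third column is -(2/c)·g₂'(x) + 2·g₃(x). That is, D₂ = T·B₂·T⁻¹ with B₂ the stated operator matrix. -/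

import Mathlib

open Matrix

/-- The polynomial matrix T(x). -/
noncomputable def T (a c : ℝ) (x : ℝ) : Matrix (Fin 3) (Fin 3) ℝ :=
  !![1, a * x, 0; 0, 1, 0; 0, c * x, 1]

/-- The inverse T(x)⁻¹. -/
noncomputable def Tinv (a c : ℝ) (x : ℝ) : Matrix (Fin 3) (Fin 3) ℝ :=
  !![1, -a * x, 0; 0, 1, 0; 0, -c * x, 1]

/-- Second-order coefficient of the operator D₂. -/
noncomputable def G2 (a c : ℝ) (x : ℝ) : Matrix (Fin 3) (Fin 3) ℝ :=
  !![0, a * x, 0; 0, 1, 0; 0, c * x, 0]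

/-- First-order coefficient of the operator D₂. -/
noncomputable def G1 (a c : ℝ) (x : ℝ) : Matrix (Fin 3) (Fin 3) ℝ :=
  !![0, 2 * a, -2 * a * x / c;
     0, 0, -2 / c;
     0, 2 * c + 2 / c, -2 * x]

/-- Zeroth-order coefficient of the operator D₂. -/
noncomputable def G0 (a c : ℝ) : Matrix (Fin 3) (Fin 3) ℝ :=
  !![2 + 4 / c ^ 2, 0, -2 * a / c;
     0, 2 + 4 / c ^ 2, 0;
     0, 0, 0]

/-- Entrywise derivative of a matrix-valued function. -/
noncomputable def mderiv (f : ℝ → Matrix (Fin 3) (Fin 3) ℝ) (x : ℝ) :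
    Matrix (Fin 3) (Fin 3) ℝ :=
  Matrix.of fun i j => deriv (fun y => f y i j) x

/-! Writing `g = f·T`, the product rule gives `g' = f'·T + f·T'` and `g'' = f''·T + 2 f'·T'`,
since `T` is affine in `x`. Substituting this 2-jet of `g` into `B₂` and multiplying by `T⁻¹`
turns the claim into a polynomial identity in the jet `(f, f', f'')` of `f` at `x`. -/

noncomputable def Tderiv (a c : ℝ) : Matrix (Fin 3) (Fin 3) ℝ :=
  !![0, a, 0; 0, 0, 0; 0, c, 0]

noncomputable def applyD2 (a c x : ℝ) (F F' F'' : Matrix (Fin 3) (Fin 3) ℝ) :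
    Matrix (Fin 3) (Fin 3) ℝ :=
  F'' * G2 a c x + F' * G1 a c x + F * G0 a c

/-- `(g·B₂)(x)` for a function `g` with `g(x) = G`, `g'(x) = G'`, `g''(x) = G''`. -/
noncomputable def applyB2 (c x : ℝ) (G G' G'' : Matrix (Fin 3) (Fin 3) ℝ) :
    Matrix (Fin 3) (Fin 3) ℝ :=
  Matrix.of fun i =>
    ![2 * (c ^ 2 + 2) / c ^ 2 * G i 0,
      G'' i 1 - 2 * x * G' i 1 + 2 * (c ^ 2 + 2) / c ^ 2 * G i 1
        + 2 / c * (G' i 2 - 2 * x * G i 2),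
      -(2 / c) * G' i 1 + 2 * G i 2]

theorem applyD2_eq_applyB2_mul_Tinv {c : ℝ} (hc : c ≠ 0) (a x : ℝ)
    (F F' F'' : Matrix (Fin 3) (Fin 3) ℝ) :
    applyD2 a c x F F' F''
      = applyB2 c x (F * T a c x) (F' * T a c x + F * Tderiv a c)
          (F'' * T a c x + 2 • (F' * Tderiv a c)) * Tinv a c x := by
  ext i j
  fin_cases j <;>
    · simp only [applyD2, applyB2, G2, G1, G0, T, Tinv, Tderiv, Matrix.add_apply,
        Matrix.smul_apply, mul_apply, of_apply, Fin.sum_univ_three, cons_val', cons_val,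
        cons_val_zero, cons_val_one, cons_val_fin_one, Fin.isValue, Fin.zero_eta, Fin.mk_one,
        Fin.reduceFinMk]
      field_simp
      ring

section mderiv

variable {f h : ℝ → Matrix (Fin 3) (Fin 3) ℝ} {x : ℝ}

theorem differentiableAt_mul_apply (hf : ∀ i j, DifferentiableAt ℝ (fun y => f y i j) x)
    (hh : ∀ i j, DifferentiableAt ℝ (fun y => h y i j) x) (i j : Fin 3) :
    DifferentiableAt ℝ (fun y => (f y * h y) i j) x := by
  simp only [mul_apply]
  exact DifferentiableAt.fun_sum fun k _ => (hf i k).mul (hh k j)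

theorem mderiv_add (hf : ∀ i j, DifferentiableAt ℝ (fun y => f y i j) x)
    (hh : ∀ i j, DifferentiableAt ℝ (fun y => h y i j) x) :
    mderiv (fun y => f y + h y) x = mderiv f x + mderiv h x := by
  ext i j
  exact deriv_add (hf i j) (hh i j)

theorem mderiv_mul (hf : ∀ i j, DifferentiableAt ℝ (fun y => f y i j) x)
    (hh : ∀ i j, DifferentiableAt ℝ (fun y => h y i j) x) :
    mderiv (fun y => f y * h y) x = mderiv f x * h x + f x * mderiv h x := by
  ext i j
  simp only [mderiv, of_apply, Matrix.add_apply, mul_apply, ← Finset.sum_add_distrib]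
  exact (HasDerivAt.fun_sum (u := Finset.univ) fun k _ =>
    (hf i k).hasDerivAt.fun_mul (hh k j).hasDerivAt).deriv

theorem mderiv_const (A : Matrix (Fin 3) (Fin 3) ℝ) : mderiv (fun _ => A) x = 0 := by
  ext i j
  exact deriv_const x (A i j)

end mderiv

section T

variable (a c : ℝ)

theorem differentiable_T_apply (i j : Fin 3) : Differentiable ℝ (fun y => T a c y i j) := by
  fin_cases i <;> fin_cases j <;>
    simp only [T, of_apply, cons_val', cons_val, cons_val_zero, cons_val_one, cons_val_fin_one,
      Fin.isValue, Fin.zero_eta, Fin.mk_one, Fin.reduceFinMk] <;> fun_prop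

theorem mderiv_T (x : ℝ) : mderiv (T a c) x = Tderiv a c := by
  ext i j
  fin_cases i <;> fin_cases j <;> simp [mderiv, T, Tderiv]

variable {a c} {f : ℝ → Matrix (Fin 3) (Fin 3) ℝ}

theorem mderiv_mul_T (hf : ∀ i j, Differentiable ℝ (fun y => f y i j)) :
    mderiv (fun y => f y * T a c y) = fun y => mderiv f y * T a c y + f y * Tderiv a c := by
  funext y
  rw [mderiv_mul (fun i j => hf i j y) (fun i j => differentiable_T_apply a c i j y), mderiv_T]

theorem mderiv_mderiv_mul_T (hf : ∀ i j, ContDiff ℝ 2 (fun y => f y i j)) (x : ℝ) :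
    mderiv (mderiv (fun y => f y * T a c y)) x
      = mderiv (mderiv f) x * T a c x + 2 • (mderiv f x * Tderiv a c) := by
  have hf₁ (i j : Fin 3) (y : ℝ) : DifferentiableAt ℝ (fun z => f z i j) y :=
    (hf i j).differentiable two_ne_zero y
  have hf₂ (i j : Fin 3) (y : ℝ) : DifferentiableAt ℝ (fun z => mderiv f z i j) y :=
    (hf i j).differentiable_deriv_two y
  have hconst (i j : Fin 3) : DifferentiableAt ℝ (fun _ : ℝ => Tderiv a c i j) x :=
    differentiableAt_const _
  rw [mderiv_mul_T fun i j y => hf₁ i j y,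
    mderiv_add (differentiableAt_mul_apply (hf₂ · · x) (differentiable_T_apply a c · · x))
      (differentiableAt_mul_apply (hf₁ · · x) hconst),
    mderiv_mul (hf₂ · · x) (differentiable_T_apply a c · · x), mderiv_T,
    mderiv_mul (hf₁ · · x) hconst, mderiv_const, mul_zero, add_zero, two_smul, add_assoc]

end T

theorem D2_conjugated_general (a c : ℝ) (hc : c ≠ 0) (f : ℝ → Matrix (Fin 3) (Fin 3) ℝ)
    (hf : ∀ i j, ContDiff ℝ 2 (fun x => f x i j))
    (g : ℝ → Matrix (Fin 3) (Fin 3) ℝ) (hg : ∀ y, g y = f y * T a c y) (x : ℝ) :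
    mderiv (mderiv f) x * G2 a c x + mderiv f x * G1 a c x + f x * G0 a c
      = (Matrix.of fun i =>
          ![2 * (c ^ 2 + 2) / c ^ 2 * g x i 0,
            deriv (deriv (fun y => g y i 1)) x - 2 * x * deriv (fun y => g y i 1) x
              + 2 * (c ^ 2 + 2) / c ^ 2 * g x i 1
              + 2 / c * (deriv (fun y => g y i 2) x - 2 * x * g x i 2),
            -(2 / c) * deriv (fun y => g y i 1) x + 2 * g x i 2]) * Tinv a c x := by
  change applyD2 a c x (f x) (mderiv f x) (mderiv (mderiv f) x)
    = applyB2 c x (g x) (mderiv g x) (mderiv (mderiv g) x) * Tinv a c x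
  obtain rfl : g = fun y => f y * T a c y := funext hg
  rw [mderiv_mderiv_mul_T hf,
    mderiv_mul_T fun i j => (hf i j).differentiable two_ne_zero]
  exact applyD2_eq_applyB2_mul_Tinv hc a x _ _ _

/-- the conjugation formula D₂ = T·B₂·T⁻¹: for every C² matrix-valued
function f, with g(y) = f(y)·T(y) and columns g₁, g₂, g₃ of g,
f''(x)·G₂(x) + f'(x)·G₁(x) + f(x)·G₀ = R(x)·T(x)⁻¹, where the columns of R(x) are
(2(c²+2)/c²)·g₁(x),  g₂''(x) - 2x·g₂'(x) + (2(c²+2)/c²)·g₂(x) + (2/c)(g₃'(x) - 2x·g₃(x)),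
and -(2/c)·g₂'(x) + 2·g₃(x). -/
theorem D2_conjugated (a b c : ℝ) (hc : c ≠ 0) (f : ℝ → Matrix (Fin 3) (Fin 3) ℝ)
    (hf : ∀ i j, ContDiff ℝ 2 (fun x => f x i j))
    (g : ℝ → Matrix (Fin 3) (Fin 3) ℝ) (hg : ∀ y, g y = f y * T a c y) (x : ℝ) :
    mderiv (mderiv f) x * G2 a c x + mderiv f x * G1 a c x + f x * G0 a c
      = (Matrix.of fun i =>
          ![2 * (c ^ 2 + 2) / c ^ 2 * g x i 0,
            deriv (deriv (fun y => g y i 1)) x - 2 * x * deriv (fun y => g y i 1) x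
              + 2 * (c ^ 2 + 2) / c ^ 2 * g x i 1
              + 2 / c * (deriv (fun y => g y i 2) x - 2 * x * g x i 2),
            -(2 / c) * deriv (fun y => g y i 1) x + 2 * g x i 2]) * Tinv a c x :=
  D2_conjugated_general a c hc f hf g hg x
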